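/- arXiv:0710.3652 — 3 statements merged into one kernel-verified Lean document; each statement's English description precedes it below -/
import Mathlib

section
/- Let Φ : ℝ^{2d} → ℝ satisfy conditions (i), (ii) and (iii), and let χ = (x(·,·), ξ(·,·)) : ℝ^{2d} → ℝ^{2d} be the canonical transformation generated by Φ. Then there exists a constant C > 0 such that for all m, n, m', n' ∈ ℝ^d, |∇_x Φ(m',n) − n'| + |∇_η Φ(m',n) − m| ≥ C ( |x(m,n) − m'| + |ξ(m,n) − n'| ). -/
open MeasureTheory Filter
open scoped RealInnerProductSpace ENNReal NNReal

noncomputable section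

/-- Euclidean space `ℝ^d`. -/
abbrev Ed (d : ℕ) : Type := EuclideanSpace ℝ (Fin d)

/-- `∇ₓΦ(x,η)`. -/
def gradX {d : ℕ} (Φ : Ed d × Ed d → ℝ) (x η : Ed d) : Ed d := gradient (fun x' => Φ (x', η)) x

/-- `∇_ηΦ(x,η)`. -/
def gradEta {d : ℕ} (Φ : Ed d × Ed d → ℝ) (x η : Ed d) : Ed d := gradient (fun η' => Φ (x, η')) η

/-- The `d × d` matrix of mixed second derivatives `∂_{x_i}∂_{η_j}Φ(x,η)`. -/
def mixedHess {d : ℕ} (Φ : Ed d × Ed d → ℝ) (x η : Ed d) : Matrix (Fin d) (Fin d) ℝ :=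
  Matrix.of fun i j =>
    fderiv ℝ (fun x' => fderiv ℝ (fun η' => Φ (x', η')) η (EuclideanSpace.single j 1)) x
      (EuclideanSpace.single i 1)

/-- Lemma in Section 3: for a phase satisfying (i), (ii), (iii) with canonical
transformation `χ = (x(·,·), ξ(·,·))`, there is `C > 0` with
`|∇ₓΦ(m',n) − n'| + |∇_ηΦ(m',n) − m| ≥ C (|x(m,n) − m'| + |ξ(m,n) − n'|)` for all
`m, n, m', n' ∈ ℝ^d`. -/
theorem statement3 {d : ℕ} (Φ : Ed d × Ed d → ℝ) (χ : Ed d × Ed d → Ed d × Ed d)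
    (χinv : Ed d × Ed d → Ed d × Ed d)
    (hΦ_smooth : ContDiff ℝ (⊤ : ℕ∞) Φ)
    (hΦ_bd : ∀ k : ℕ, 2 ≤ k → ∃ C > 0, ∀ z : Ed d × Ed d, ‖iteratedFDeriv ℝ k Φ z‖ ≤ C)
    (hΦ_nondeg : ∃ δ > 0, ∀ x η : Ed d, δ ≤ |(mixedHess Φ x η).det|)
    -- `χ` is a smooth bilipschitz diffeomorphism with inverse `χinv` …
    (hχ_smooth : ContDiff ℝ (⊤ : ℕ∞) χ)
    (hχinv_smooth : ContDiff ℝ (⊤ : ℕ∞) χinv)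
    (hχ_left : Function.LeftInverse χinv χ)
    (hχ_right : Function.RightInverse χinv χ)
    (hχ_lip : ∃ L : ℝ≥0, LipschitzWith L χ)
    (hχinv_lip : ∃ L : ℝ≥0, LipschitzWith L χinv)
    -- … generated by `Φ`: `χ(∇_ηΦ(x,η), η) = (x, ∇ₓΦ(x,η))`:
    (hχ_gen : ∀ x η : Ed d, χ (gradEta Φ x η, η) = (x, gradX Φ x η)) :
    ∃ C > 0, ∀ m n m' n' : Ed d,
      C * (‖(χ (m, n)).1 - m'‖ + ‖(χ (m, n)).2 - n'‖) ≤
        ‖gradX Φ m' n - n'‖ + ‖gradEta Φ m' n - m‖ := by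
  obtain ⟨L, hL⟩ := hχ_lip
  refine ⟨1 / (2 * (L : ℝ) + 1), by positivity, ?_⟩
  intro m n m' n'
  have hB := hχ_gen m' n
  have hAB : ‖χ (m, n) - χ (gradEta Φ m' n, n)‖ ≤ (L : ℝ) * ‖gradEta Φ m' n - m‖ := by
    calc ‖χ (m, n) - χ (gradEta Φ m' n, n)‖
        = dist (χ (m, n)) (χ (gradEta Φ m' n, n)) := (dist_eq_norm _ _).symm
      _ ≤ (L : ℝ) * dist (m, n) (gradEta Φ m' n, n) := hL.dist_le_mul _ _
      _ = (L : ℝ) * ‖gradEta Φ m' n - m‖ := by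
          rw [Prod.dist_eq]
          simp [dist_eq_norm, norm_sub_rev m]
  have h1 : ‖(χ (m, n)).1 - m'‖ ≤ ‖χ (m, n) - χ (gradEta Φ m' n, n)‖ := by
    have := norm_fst_le (χ (m, n) - χ (gradEta Φ m' n, n))
    simpa [hB] using this
  have h2 : ‖(χ (m, n)).2 - n'‖ ≤
      ‖χ (m, n) - χ (gradEta Φ m' n, n)‖ + ‖gradX Φ m' n - n'‖ := by
    have hs : ‖(χ (m, n)).2 - gradX Φ m' n‖ ≤ ‖χ (m, n) - χ (gradEta Φ m' n, n)‖ := by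
      have := norm_snd_le (χ (m, n) - χ (gradEta Φ m' n, n))
      simpa [hB] using this
    calc ‖(χ (m, n)).2 - n'‖
        = ‖((χ (m, n)).2 - gradX Φ m' n) + (gradX Φ m' n - n')‖ := by abel_nf
      _ ≤ ‖(χ (m, n)).2 - gradX Φ m' n‖ + ‖gradX Φ m' n - n'‖ := norm_add_le _ _
      _ ≤ _ := by linarith
  rw [div_mul_eq_mul_div, one_mul, div_le_iff₀ (by positivity)]
  have n1 := norm_nonneg (gradX Φ m' n - n')
  have n2 := norm_nonneg (gradEta Φ m' n - m)
  nlinarith [norm_nonneg (χ (m, n) - χ (gradEta Φ m' n, n)), NNReal.coe_nonneg L,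
    mul_nonneg (NNReal.coe_nonneg L) n1, mul_nonneg (NNReal.coe_nonneg L) n2]
end
end

section
/- Let Λ = αℤ^d × βℤ^d with α, β > 0 and let K_{m',n',m,n} (with (m',n'), (m,n) ∈ Λ) be a kernel such that B := sup_{n ∈ βℤ^d} Σ_{n' ∈ βℤ^d} sup_{m' ∈ αℤ^d} Σ_{m ∈ αℤ^d} |K_{m',n',m,n}| < ∞. Then the operator (Kc)_{m',n'} = Σ_{(m,n)∈Λ} K_{m',n',m,n} c_{m,n} is continuous on ℓ¹_n ℓ^∞_m; precisely, for every sequence c indexed by Λ, Σ_{n'} sup_{m'} |(Kc)_{m',n'}| ≤ B · Σ_{n} sup_{m} |c_{m,n}|. -/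
open scoped ENNReal NNReal

noncomputable section

lemma ennnorm_tsum_le' {ι : Type*} {E : Type*} [NormedAddCommGroup E] [CompleteSpace E]
    (f : ι → E) : (‖∑' i, f i‖₊ : ℝ≥0∞) ≤ ∑' i, (‖f i‖₊ : ℝ≥0∞) := by
  by_cases h : Summable fun i => ‖f i‖₊
  · rw [← ENNReal.coe_tsum h]
    exact_mod_cast nnnorm_tsum_le h
  · rw [show (∑' i, (‖f i‖₊ : ℝ≥0∞)) = ⊤ by
      by_contra hne
      exact h (ENNReal.tsum_coe_ne_top_iff_summable.mp hne)]
    exact le_top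

/-- Proposition 5.1 (i): mixed-norm Schur test. If
`B = sup_n Σ_{n'} sup_{m'} Σ_m |K_{m',n',m,n}| < ∞`, then the operator
`(Kc)_{m',n'} = Σ_{(m,n)} K_{m',n',m,n} c_{m,n}` is continuous on `ℓ¹_n ℓ^∞_m`:
`Σ_{n'} sup_{m'} |(Kc)_{m',n'}| ≤ B · Σ_n sup_m |c_{m,n}|`. The lattice
`Λ = αℤ^d × βℤ^d` is identified with `ℤ^d × ℤ^d`. -/
theorem statement7 {d : ℕ}
    (K : (Fin d → ℤ) → (Fin d → ℤ) → (Fin d → ℤ) → (Fin d → ℤ) → ℂ)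
    (B : ℝ≥0∞) (hB : B < ⊤)
    (hKB : (⨆ n : Fin d → ℤ, ∑' n' : Fin d → ℤ, ⨆ m' : Fin d → ℤ, ∑' m : Fin d → ℤ,
      (‖K m' n' m n‖₊ : ℝ≥0∞)) = B) :
    ∀ c : (Fin d → ℤ) → (Fin d → ℤ) → ℂ,
      ∑' n' : Fin d → ℤ, ⨆ m' : Fin d → ℤ,
          (‖∑' mn : (Fin d → ℤ) × (Fin d → ℤ), K m' n' mn.1 mn.2 * c mn.1 mn.2‖₊ : ℝ≥0∞) ≤
        B * ∑' n : Fin d → ℤ, ⨆ m : Fin d → ℤ, (‖c m n‖₊ : ℝ≥0∞) := by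
  intro c
  have key : ∀ n' : Fin d → ℤ,
      (⨆ m' : Fin d → ℤ,
        (‖∑' mn : (Fin d → ℤ) × (Fin d → ℤ), K m' n' mn.1 mn.2 * c mn.1 mn.2‖₊ : ℝ≥0∞)) ≤
      ∑' n : Fin d → ℤ, (⨆ m' : Fin d → ℤ, ∑' m : Fin d → ℤ, (‖K m' n' m n‖₊ : ℝ≥0∞)) *
        (⨆ m : Fin d → ℤ, (‖c m n‖₊ : ℝ≥0∞)) := by
    intro n'
    refine iSup_le fun m' => ?_
    calc (‖∑' mn : (Fin d → ℤ) × (Fin d → ℤ), K m' n' mn.1 mn.2 * c mn.1 mn.2‖₊ : ℝ≥0∞)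
        ≤ ∑' mn : (Fin d → ℤ) × (Fin d → ℤ), (‖K m' n' mn.1 mn.2 * c mn.1 mn.2‖₊ : ℝ≥0∞) :=
          ennnorm_tsum_le' _
      _ = ∑' m : Fin d → ℤ, ∑' n : Fin d → ℤ, (‖K m' n' m n * c m n‖₊ : ℝ≥0∞) :=
          ENNReal.tsum_prod (f := fun m n => (‖K m' n' m n * c m n‖₊ : ℝ≥0∞))
      _ = ∑' n : Fin d → ℤ, ∑' m : Fin d → ℤ, (‖K m' n' m n * c m n‖₊ : ℝ≥0∞) :=
          ENNReal.tsum_comm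
      _ ≤ ∑' n : Fin d → ℤ, (∑' m : Fin d → ℤ, (‖K m' n' m n‖₊ : ℝ≥0∞)) *
            (⨆ m : Fin d → ℤ, (‖c m n‖₊ : ℝ≥0∞)) := by
          refine ENNReal.tsum_le_tsum fun n => ?_
          rw [← ENNReal.tsum_mul_right]
          refine ENNReal.tsum_le_tsum fun m => ?_
          rw [nnnorm_mul, ENNReal.coe_mul]
          exact mul_le_mul_right (le_iSup (fun m => (‖c m n‖₊ : ℝ≥0∞)) m) _
      _ ≤ ∑' n : Fin d → ℤ, (⨆ m' : Fin d → ℤ, ∑' m : Fin d → ℤ, (‖K m' n' m n‖₊ : ℝ≥0∞)) *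
            (⨆ m : Fin d → ℤ, (‖c m n‖₊ : ℝ≥0∞)) :=
          ENNReal.tsum_le_tsum fun n => mul_le_mul_left
            (le_iSup (fun m' => ∑' m : Fin d → ℤ, (‖K m' n' m n‖₊ : ℝ≥0∞)) m') _
  calc ∑' n' : Fin d → ℤ, ⨆ m' : Fin d → ℤ,
        (‖∑' mn : (Fin d → ℤ) × (Fin d → ℤ), K m' n' mn.1 mn.2 * c mn.1 mn.2‖₊ : ℝ≥0∞)
      ≤ ∑' n' : Fin d → ℤ, ∑' n : Fin d → ℤ,
          (⨆ m' : Fin d → ℤ, ∑' m : Fin d → ℤ, (‖K m' n' m n‖₊ : ℝ≥0∞)) *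
          (⨆ m : Fin d → ℤ, (‖c m n‖₊ : ℝ≥0∞)) := ENNReal.tsum_le_tsum key
    _ = ∑' n : Fin d → ℤ, ∑' n' : Fin d → ℤ,
          (⨆ m' : Fin d → ℤ, ∑' m : Fin d → ℤ, (‖K m' n' m n‖₊ : ℝ≥0∞)) *
          (⨆ m : Fin d → ℤ, (‖c m n‖₊ : ℝ≥0∞)) := ENNReal.tsum_comm
    _ = ∑' n : Fin d → ℤ,
          (∑' n' : Fin d → ℤ, ⨆ m' : Fin d → ℤ, ∑' m : Fin d → ℤ, (‖K m' n' m n‖₊ : ℝ≥0∞)) *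
          (⨆ m : Fin d → ℤ, (‖c m n‖₊ : ℝ≥0∞)) := by
        simp [ENNReal.tsum_mul_right]
    _ ≤ ∑' n : Fin d → ℤ, B * (⨆ m : Fin d → ℤ, (‖c m n‖₊ : ℝ≥0∞)) :=
        ENNReal.tsum_le_tsum fun n => mul_le_mul_left
          (hKB ▸ le_iSup (fun n => ∑' n' : Fin d → ℤ, ⨆ m' : Fin d → ℤ,
            ∑' m : Fin d → ℤ, (‖K m' n' m n‖₊ : ℝ≥0∞)) n) _
    _ = B * ∑' n : Fin d → ℤ, ⨆ m : Fin d → ℤ, (‖c m n‖₊ : ℝ≥0∞) := ENNReal.tsum_mul_left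
end
end

section
/- Let Λ = αℤ^d × βℤ^d with α, β > 0 and let K_{m',n',m,n} (with (m',n'), (m,n) ∈ Λ) be a kernel satisfying all four conditions: sup_{n} Σ_{n'} sup_{m'} Σ_{m} |K_{m',n',m,n}| < ∞; sup_{n'} Σ_{n} sup_{m} Σ_{m'} |K_{m',n',m,n}| < ∞; sup_{(m',n')} Σ_{(m,n)} |K_{m',n',m,n}| < ∞; and sup_{(m,n)} Σ_{(m',n')} |K_{m',n',m,n}| < ∞. Then for every 1 ≤ p, q ≤ ∞ the operator (Kc)_{m',n'} = Σ_{(m,n)∈Λ} K_{m',n',m,n} c_{m,n} is continuous on ℓ^{p,q}(Λ): there exists C > 0 such that ‖Kc‖_{ℓ^{p,q}} ≤ C ‖c‖_{ℓ^{p,q}} for all c ∈ ℓ^{p,q}(Λ). -/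
/-!
Replacing `K` by `|K|` and `c` by `|c|` reduces everything to an operator `T` with a
nonnegative kernel acting on nonnegative sequences. The four hypotheses are exactly the bounds
for `T` at the corners `p, q ∈ {1, ∞}`: the plain Schur conditions give `ℓ^{1,1}` and
`ℓ^{∞,∞}`, the mixed ones give `ℓ^{∞,1}` and `ℓ^{1,∞}`. The other exponents follow by
interpolating first in `q` and then in `p`, in the real-variable form available for positive
operators: factor `u = v^θ w^(1-θ)` using the row norms of `u`; Hölder's inequality inside
the kernel sum gives `T u ≤ (T v)^θ (T w)^(1-θ)`, and Hölder's inequality for mixed norms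
together with the corner bounds gives `‖T u‖ ≤ S ‖u‖`.
-/

open scoped ENNReal NNReal

noncomputable section

/-- The `ℓ^p` "norm" (valued in `ℝ≥0∞`) of a family of values in `ℝ≥0∞`. -/
def eSum {ι : Type*} (p : ℝ≥0∞) (f : ι → ℝ≥0∞) : ℝ≥0∞ :=
  if p = ∞ then ⨆ i, f i else (∑' i, (f i) ^ p.toReal) ^ (1 / p.toReal)

/-- The mixed `ℓ^{p,q}` norm `( Σ_n ( Σ_m |c_{m,n}|^p )^{q/p} )^{1/q}` of a doubly indexed
sequence (suprema replacing sums when `p = ∞` or `q = ∞`). -/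
def lpqNorm {ι : Type*} (p q : ℝ≥0∞) (c : ι → ι → ℂ) : ℝ≥0∞ :=
  eSum q (fun n => eSum p (fun m => (‖c m n‖₊ : ℝ≥0∞)))

open MeasureTheory in
theorem ENNReal.tsum_rpow_mul_rpow_le {ι : Type*} {θ : ℝ} (h0 : 0 ≤ θ) (h1 : θ ≤ 1)
    (f g : ι → ℝ≥0∞) :
    ∑' i, f i ^ θ * g i ^ (1 - θ) ≤ (∑' i, f i) ^ θ * (∑' i, g i) ^ (1 - θ) := by
  let _ : MeasurableSpace ι := ⊤
  simpa only [lintegral_count' measurable_from_top] using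
    ENNReal.lintegral_mul_norm_pow_le (μ := Measure.count) measurable_from_top.aemeasurable
      measurable_from_top.aemeasurable h0 (sub_nonneg.2 h1) (add_sub_cancel θ 1)

theorem ENNReal.rpow_mul_rpow_one_sub (x : ℝ≥0∞) {θ : ℝ} (h0 : 0 ≤ θ) (h1 : θ ≤ 1) :
    x ^ θ * x ^ (1 - θ) = x := by
  rw [← ENNReal.rpow_add_of_nonneg _ _ h0 (sub_nonneg.2 h1), add_sub_cancel, ENNReal.rpow_one]

section eSum

variable {ι : Type*} {p : ℝ≥0∞}

@[simp]
theorem eSum_top (f : ι → ℝ≥0∞) : eSum ∞ f = ⨆ i, f i := by simp [eSum]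

theorem eSum_of_ne_top (hp : p ≠ ∞) (f : ι → ℝ≥0∞) :
    eSum p f = (∑' i, f i ^ p.toReal) ^ (1 / p.toReal) := by simp [eSum, hp]

@[simp]
theorem eSum_one (f : ι → ℝ≥0∞) : eSum 1 f = ∑' i, f i := by simp [eSum]

theorem eSum_rpow_toReal (hp : p ≠ 0) (hp' : p ≠ ∞) (f : ι → ℝ≥0∞) :
    eSum p f ^ p.toReal = ∑' i, f i ^ p.toReal := by
  rw [eSum_of_ne_top hp', ← ENNReal.rpow_mul,
    one_div_mul_cancel (ENNReal.toReal_pos hp hp').ne', ENNReal.rpow_one]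

theorem eSum_mono {f g : ι → ℝ≥0∞} (h : ∀ i, f i ≤ g i) : eSum p f ≤ eSum p g := by
  unfold eSum
  split
  · exact iSup_mono h
  · gcongr with i
    exact h i

theorem le_eSum (hp : p ≠ 0) (f : ι → ℝ≥0∞) (i : ι) : f i ≤ eSum p f := by
  rcases eq_or_ne p ∞ with rfl | hp'
  · exact (eSum_top f).symm ▸ le_iSup f i
  · have hpt := ENNReal.toReal_pos hp hp'
    calc f i = (f i ^ p.toReal) ^ (1 / p.toReal) := by
          rw [← ENNReal.rpow_mul, mul_one_div_cancel hpt.ne', ENNReal.rpow_one]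
      _ ≤ eSum p f := by
          rw [eSum_of_ne_top hp']
          gcongr
          exact ENNReal.le_tsum i

theorem eSum_mul_const (hp : p ≠ 0) (f : ι → ℝ≥0∞) (c : ℝ≥0∞) :
    eSum p (fun i => f i * c) = eSum p f * c := by
  rcases eq_or_ne p ∞ with rfl | hp'
  · simp only [eSum_top, ENNReal.iSup_mul]
  · have hpt := ENNReal.toReal_pos hp hp'
    simp only [eSum_of_ne_top hp', ENNReal.mul_rpow_of_nonneg _ _ hpt.le, ENNReal.tsum_mul_right]
    rw [ENNReal.mul_rpow_of_nonneg _ _ (by positivity), ← ENNReal.rpow_mul,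
      mul_one_div_cancel hpt.ne', ENNReal.rpow_one]

theorem eSum_rpow_mul_rpow_le (hp : p ≠ 0) {θ : ℝ} (h0 : 0 ≤ θ) (h1 : θ ≤ 1)
    (f g : ι → ℝ≥0∞) :
    eSum p (fun i => f i ^ θ * g i ^ (1 - θ)) ≤ eSum p f ^ θ * eSum p g ^ (1 - θ) := by
  rcases eq_or_ne p ∞ with rfl | hp'
  · simp only [eSum_top]
    exact iSup_le fun i => by gcongr <;> exact le_iSup _ i
  · have hpt := ENNReal.toReal_pos hp hp'
    have hpow : ∀ (x : ℝ≥0∞) (a : ℝ), (x ^ a) ^ p.toReal = (x ^ p.toReal) ^ a := fun x a => by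
      rw [← ENNReal.rpow_mul, ← ENNReal.rpow_mul, mul_comm]
    simp only [eSum_of_ne_top hp', ENNReal.mul_rpow_of_nonneg _ _ hpt.le, hpow]
    calc (∑' i, (f i ^ p.toReal) ^ θ * (g i ^ p.toReal) ^ (1 - θ)) ^ (1 / p.toReal)
        ≤ ((∑' i, f i ^ p.toReal) ^ θ * (∑' i, g i ^ p.toReal) ^ (1 - θ)) ^ (1 / p.toReal) := by
          gcongr
          exact ENNReal.tsum_rpow_mul_rpow_le h0 h1 _ _
      _ = _ := by
          rw [ENNReal.mul_rpow_of_nonneg _ _ (by positivity), ← ENNReal.rpow_mul,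
            ← ENNReal.rpow_mul, ← ENNReal.rpow_mul, ← ENNReal.rpow_mul,
            mul_comm θ, mul_comm (1 - θ)]

theorem eSum_rpow_mul_rpow_le_eSum_one_eSum_top {r : ℝ≥0∞} (hr : 1 ≤ r) (hr' : r ≠ ∞)
    (f g : ι → ℝ≥0∞) :
    eSum r (fun i => f i ^ (1 / r.toReal) * g i ^ (1 - 1 / r.toReal)) ≤
      eSum 1 f ^ (1 / r.toReal) * eSum ∞ g ^ (1 - 1 / r.toReal) := by
  have hrt : 1 ≤ r.toReal := by simpa using ENNReal.toReal_mono hr' hr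
  have hrt0 : 0 < r.toReal := by linarith
  have hpow : ∀ i, (f i ^ (1 / r.toReal) * g i ^ (1 - 1 / r.toReal)) ^ r.toReal
      = f i * g i ^ (r.toReal - 1) := fun i => by
    rw [ENNReal.mul_rpow_of_nonneg _ _ hrt0.le, ← ENNReal.rpow_mul, ← ENNReal.rpow_mul,
      one_div_mul_cancel hrt0.ne', ENNReal.rpow_one, sub_mul, one_mul,
      one_div_mul_cancel hrt0.ne']
  simp only [eSum_of_ne_top hr', hpow, eSum_one, eSum_top]
  calc (∑' i, f i * g i ^ (r.toReal - 1)) ^ (1 / r.toReal)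
      ≤ ((∑' i, f i) * (⨆ j, g j) ^ (r.toReal - 1)) ^ (1 / r.toReal) := by
        rw [← ENNReal.tsum_mul_right]
        gcongr with i
        exact le_iSup g i
    _ = _ := by
        rw [ENNReal.mul_rpow_of_nonneg _ _ (by positivity), ← ENNReal.rpow_mul]
        congr 2
        field_simp

end eSum

section MixedNorm

variable {α β : Type*} {p q : ℝ≥0∞}

def mixedENorm (p q : ℝ≥0∞) (u : α → β → ℝ≥0∞) : ℝ≥0∞ :=
  eSum q (fun n => eSum p (fun m => u m n))

theorem mixedENorm_mono {u v : α → β → ℝ≥0∞} (h : ∀ m n, u m n ≤ v m n) :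
    mixedENorm p q u ≤ mixedENorm p q v :=
  eSum_mono fun n => eSum_mono fun m => h m n

theorem mixedENorm_one_one (u : α → β → ℝ≥0∞) :
    mixedENorm 1 1 u = ∑' mn : α × β, u mn.1 mn.2 := by
  simp only [mixedENorm, eSum_one]
  rw [ENNReal.tsum_prod, ENNReal.tsum_comm]

theorem mixedENorm_top_top (u : α → β → ℝ≥0∞) :
    mixedENorm ∞ ∞ u = ⨆ mn : α × β, u mn.1 mn.2 := by
  simp only [mixedENorm, eSum_top]
  rw [iSup_prod, iSup_comm]

theorem mixedENorm_rpow_mul_rpow_le_of_q (hp : p ≠ 0) (hq : 1 ≤ q) (hq' : q ≠ ∞)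
    (v w : α → β → ℝ≥0∞) :
    mixedENorm p q (fun m n => v m n ^ (1 / q.toReal) * w m n ^ (1 - 1 / q.toReal)) ≤
      mixedENorm p 1 v ^ (1 / q.toReal) * mixedENorm p ∞ w ^ (1 - 1 / q.toReal) := by
  have hqt : 1 ≤ q.toReal := by simpa using ENNReal.toReal_mono hq' hq
  calc _ ≤ eSum q (fun n => eSum p (fun m => v m n) ^ (1 / q.toReal) *
          eSum p (fun m => w m n) ^ (1 - 1 / q.toReal)) :=
        eSum_mono fun n => eSum_rpow_mul_rpow_le hp (by positivity)
          (div_le_one_of_le₀ hqt (by positivity)) _ _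
    _ ≤ _ := eSum_rpow_mul_rpow_le_eSum_one_eSum_top hq hq' _ _

theorem mixedENorm_rpow_mul_rpow_le_of_p (hp : 1 ≤ p) (hp' : p ≠ ∞) (hq : q ≠ 0)
    (v w : α → β → ℝ≥0∞) :
    mixedENorm p q (fun m n => v m n ^ (1 / p.toReal) * w m n ^ (1 - 1 / p.toReal)) ≤
      mixedENorm 1 q v ^ (1 / p.toReal) * mixedENorm ∞ q w ^ (1 - 1 / p.toReal) := by
  have hpt : 1 ≤ p.toReal := by simpa using ENNReal.toReal_mono hp' hp
  calc _ ≤ eSum q (fun n => eSum 1 (fun m => v m n) ^ (1 / p.toReal) *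
          eSum ∞ (fun m => w m n) ^ (1 - 1 / p.toReal)) :=
        eSum_mono fun n => eSum_rpow_mul_rpow_le_eSum_one_eSum_top hp hp' _ _
    _ ≤ _ := eSum_rpow_mul_rpow_le hq (by positivity)
          (div_le_one_of_le₀ hpt (by positivity)) _ _

end MixedNorm

theorem ENNReal.mul_rpow_mul_mul_rpow_mul {x c : ℝ≥0∞} (hc : c ≠ 0) (hc' : c ≠ ∞) {a b θ : ℝ}
    (h0 : 0 ≤ θ) (h1 : θ ≤ 1) (h : a * θ + b * (1 - θ) = 0) :
    (x * c ^ a) ^ θ * (x * c ^ b) ^ (1 - θ) = x := by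
  rw [ENNReal.mul_rpow_of_nonneg _ _ h0, ENNReal.mul_rpow_of_nonneg _ _ (sub_nonneg.2 h1),
    ← ENNReal.rpow_mul c, ← ENNReal.rpow_mul c]
  calc x ^ θ * c ^ (a * θ) * (x ^ (1 - θ) * c ^ (b * (1 - θ)))
      = (x ^ θ * x ^ (1 - θ)) * (c ^ (a * θ) * c ^ (b * (1 - θ))) := by ring
    _ = x := by
        rw [ENNReal.rpow_mul_rpow_one_sub x h0 h1, ← ENNReal.rpow_add _ _ hc hc', h,
          ENNReal.rpow_zero, mul_one]

section Factorization

variable {α β : Type*} {p q : ℝ≥0∞} {u : α → β → ℝ≥0∞}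

theorem eSum_le_mixedENorm (hq : q ≠ 0) (u : α → β → ℝ≥0∞) (n : β) :
    eSum p (fun m => u m n) ≤ mixedENorm p q u :=
  le_eSum hq (fun n => eSum p (fun m => u m n)) n

/-- Witnesses: `v = u s^(q-1)` and `w = u / s`, where `s n = ‖u(·, n)‖_p`. -/
theorem exists_factorization_of_q (hp : p ≠ 0) (hq : 1 ≤ q) (hq' : q ≠ ∞)
    (hu : mixedENorm p q u < ∞) :
    ∃ v w : α → β → ℝ≥0∞,
      u = (fun m n => v m n ^ (1 / q.toReal) * w m n ^ (1 - 1 / q.toReal)) ∧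
      mixedENorm p 1 v < ∞ ∧ mixedENorm p ∞ w < ∞ ∧
      mixedENorm p 1 v ^ (1 / q.toReal) * mixedENorm p ∞ w ^ (1 - 1 / q.toReal) ≤
        mixedENorm p q u := by
  have hq0 : q ≠ 0 := (zero_lt_one.trans_le hq).ne'
  have hqt : 1 ≤ q.toReal := by simpa using ENNReal.toReal_mono hq' hq
  have hqt0 : 0 < q.toReal := by linarith
  set s : β → ℝ≥0∞ := fun n => eSum p (fun m => u m n)
  have hs : ∀ n, s n ≠ ∞ := fun n => ((eSum_le_mixedENorm hq0 u n).trans_lt hu).ne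
  have hv : mixedENorm p 1 (fun m n => u m n * s n ^ (q.toReal - 1)) =
      mixedENorm p q u ^ q.toReal := by
    simp only [mixedENorm, eSum_one, eSum_mul_const hp]
    rw [eSum_rpow_toReal hq0 hq']
    refine tsum_congr fun n => ?_
    change s n * s n ^ (q.toReal - 1) = s n ^ q.toReal
    conv_rhs => rw [← add_sub_cancel 1 q.toReal,
      ENNReal.rpow_add_of_nonneg _ _ zero_le_one (by linarith), ENNReal.rpow_one]
  have hw : mixedENorm p ∞ (fun m n => u m n * s n ^ (-1 : ℝ)) ≤ 1 := by
    simp only [mixedENorm, eSum_top, eSum_mul_const hp, ENNReal.rpow_neg_one]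
    exact iSup_le fun n => ENNReal.mul_inv_le_one _
  refine ⟨_, _, funext₂ fun m n => ?_, hv ▸ ENNReal.rpow_lt_top_of_nonneg hqt0.le hu.ne,
    hw.trans_lt ENNReal.one_lt_top, ?_⟩
  · rcases eq_or_ne (s n) 0 with hs0 | hs0
    · have hu0 : u m n = 0 := nonpos_iff_eq_zero.1 (hs0 ▸ le_eSum hp (fun m => u m n) m)
      simp [hu0, hqt0]
    · refine (ENNReal.mul_rpow_mul_mul_rpow_mul hs0 (hs n) (by positivity)
        (div_le_one_of_le₀ hqt hqt0.le) ?_).symm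
      field_simp
      ring
  · calc _ ≤ (mixedENorm p q u ^ q.toReal) ^ (1 / q.toReal) * 1 ^ (1 - 1 / q.toReal) := by
          rw [hv]
          gcongr
          exact sub_nonneg.2 (div_le_one_of_le₀ hqt hqt0.le)
      _ = mixedENorm p q u := by
          rw [ENNReal.one_rpow, mul_one, ← ENNReal.rpow_mul, mul_one_div_cancel hqt0.ne',
            ENNReal.rpow_one]

/-- Witnesses: `v = u^p s^(1-p)` and `w = s`, where `s n = ‖u(·, n)‖_p`. -/
theorem exists_factorization_of_p (hp : 1 ≤ p) (hp' : p ≠ ∞) (hq : q ≠ 0)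
    (hu : mixedENorm p q u < ∞) :
    ∃ v w : α → β → ℝ≥0∞,
      u = (fun m n => v m n ^ (1 / p.toReal) * w m n ^ (1 - 1 / p.toReal)) ∧
      mixedENorm 1 q v < ∞ ∧ mixedENorm ∞ q w < ∞ ∧
      mixedENorm 1 q v ^ (1 / p.toReal) * mixedENorm ∞ q w ^ (1 - 1 / p.toReal) ≤
        mixedENorm p q u := by
  have hp0 : p ≠ 0 := (zero_lt_one.trans_le hp).ne'
  have hpt : 1 ≤ p.toReal := by simpa using ENNReal.toReal_mono hp' hp
  have hpt0 : 0 < p.toReal := by linarith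
  have hθ1 : 1 / p.toReal ≤ 1 := div_le_one_of_le₀ hpt hpt0.le
  set s : β → ℝ≥0∞ := fun n => eSum p (fun m => u m n)
  have hs : ∀ n, s n ≠ ∞ := fun n => ((eSum_le_mixedENorm hq u n).trans_lt hu).ne
  have hv : mixedENorm 1 q (fun m n => u m n ^ p.toReal * s n ^ (1 - p.toReal)) =
      mixedENorm p q u := by
    simp only [mixedENorm, eSum_one, ENNReal.tsum_mul_right]
    refine congrArg (eSum q) (funext fun n => ?_)
    rw [← eSum_rpow_toReal hp0 hp' (fun m => u m n)]
    change s n ^ p.toReal * s n ^ (1 - p.toReal) = s n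
    rw [← ENNReal.rpow_add_of_add_pos (hs n) _ _ (by simp), add_sub_cancel, ENNReal.rpow_one]
  have hw : mixedENorm ∞ q (fun (_ : α) n => s n) ≤ mixedENorm p q u :=
    eSum_mono fun n => (eSum_top _).trans_le iSup_const_le
  refine ⟨_, _, funext₂ fun m n => ?_, hv ▸ hu, hw.trans_lt hu, ?_⟩
  · rcases eq_or_ne (s n) 0 with hs0 | hs0
    · have hu0 : u m n = 0 := nonpos_iff_eq_zero.1 (hs0 ▸ le_eSum hp0 (fun m => u m n) m)
      simp [hu0, hpt0]
    · rw [ENNReal.mul_rpow_of_nonneg _ _ (by positivity), ← ENNReal.rpow_mul,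
        mul_one_div_cancel hpt0.ne', ENNReal.rpow_one, ← ENNReal.rpow_mul, mul_assoc,
        ← ENNReal.rpow_add _ _ hs0 (hs n)]
      rw [show (1 - p.toReal) * (1 / p.toReal) + (1 - 1 / p.toReal) = 0 by field_simp; ring,
        ENNReal.rpow_zero, mul_one]
  · calc _ ≤ mixedENorm p q u ^ (1 / p.toReal) * mixedENorm p q u ^ (1 - 1 / p.toReal) := by
          rw [hv]
          gcongr
      _ = mixedENorm p q u := ENNReal.rpow_mul_rpow_one_sub _ (by positivity) hθ1

end Factorization

section Kernel

variable {α β : Type*} {k : α → β → α → β → ℝ≥0∞} {S : ℝ≥0∞}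

def kernelOp (k : α → β → α → β → ℝ≥0∞) (u : α → β → ℝ≥0∞) (m' : α) (n' : β) : ℝ≥0∞ :=
  ∑' mn : α × β, k m' n' mn.1 mn.2 * u mn.1 mn.2

theorem kernelOp_eq_tsum_tsum (k : α → β → α → β → ℝ≥0∞) (u : α → β → ℝ≥0∞) (m' : α) (n' : β) :
    kernelOp k u m' n' = ∑' n, ∑' m, k m' n' m n * u m n := by
  rw [kernelOp, ENNReal.tsum_prod (f := fun m n => k m' n' m n * u m n), ENNReal.tsum_comm]

theorem kernelOp_rpow_mul_rpow_le {θ : ℝ} (h0 : 0 ≤ θ) (h1 : θ ≤ 1)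
    (k : α → β → α → β → ℝ≥0∞) (v w : α → β → ℝ≥0∞) (m' : α) (n' : β) :
    kernelOp k (fun m n => v m n ^ θ * w m n ^ (1 - θ)) m' n' ≤
      kernelOp k v m' n' ^ θ * kernelOp k w m' n' ^ (1 - θ) := by
  have hsplit : ∀ a b c : ℝ≥0∞, a * (b ^ θ * c ^ (1 - θ)) = (a * b) ^ θ * (a * c) ^ (1 - θ) :=
    fun a b c => by
      rw [ENNReal.mul_rpow_of_nonneg _ _ h0, ENNReal.mul_rpow_of_nonneg _ _ (sub_nonneg.2 h1)]
      conv_lhs => rw [← ENNReal.rpow_mul_rpow_one_sub a h0 h1]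
      ring
  simp only [kernelOp, hsplit]
  exact ENNReal.tsum_rpow_mul_rpow_le h0 h1 _ _

def KernelBound (k : α → β → α → β → ℝ≥0∞) (N : (α → β → ℝ≥0∞) → ℝ≥0∞) (S : ℝ≥0∞) : Prop :=
  ∀ u, N u < ∞ → N (kernelOp k u) ≤ S * N u

theorem KernelBound.mono {N : (α → β → ℝ≥0∞) → ℝ≥0∞} {S' : ℝ≥0∞} (h : KernelBound k N S)
    (hS : S ≤ S') : KernelBound k N S' :=
  fun u hu => (h u hu).trans (by gcongr)

theorem KernelBound.interpolate {N N₀ N₁ : (α → β → ℝ≥0∞) → ℝ≥0∞} {θ : ℝ}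
    (h0 : 0 ≤ θ) (h1 : θ ≤ 1) (hmono : ∀ u v, (∀ m n, u m n ≤ v m n) → N u ≤ N v)
    (hholder : ∀ v w, N (fun m n => v m n ^ θ * w m n ^ (1 - θ)) ≤ N₀ v ^ θ * N₁ w ^ (1 - θ))
    (hfactor : ∀ u, N u < ∞ → ∃ v w, u = (fun m n => v m n ^ θ * w m n ^ (1 - θ)) ∧
      N₀ v < ∞ ∧ N₁ w < ∞ ∧ N₀ v ^ θ * N₁ w ^ (1 - θ) ≤ N u)
    (hk₀ : KernelBound k N₀ S) (hk₁ : KernelBound k N₁ S) : KernelBound k N S := by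
  intro u hu
  obtain ⟨v, w, rfl, hv, hw, hvw⟩ := hfactor u hu
  have h1' : 0 ≤ 1 - θ := sub_nonneg.2 h1
  calc N (kernelOp k fun m n => v m n ^ θ * w m n ^ (1 - θ))
      ≤ N (fun m' n' => kernelOp k v m' n' ^ θ * kernelOp k w m' n' ^ (1 - θ)) :=
        hmono _ _ (kernelOp_rpow_mul_rpow_le h0 h1 k v w)
    _ ≤ N₀ (kernelOp k v) ^ θ * N₁ (kernelOp k w) ^ (1 - θ) := hholder _ _
    _ ≤ (S * N₀ v) ^ θ * (S * N₁ w) ^ (1 - θ) := by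
        gcongr
        exacts [hk₀ v hv, hk₁ w hw]
    _ = S * (N₀ v ^ θ * N₁ w ^ (1 - θ)) := by
        rw [ENNReal.mul_rpow_of_nonneg _ _ h0, ENNReal.mul_rpow_of_nonneg _ _ h1']
        conv_rhs => rw [← ENNReal.rpow_mul_rpow_one_sub S h0 h1]
        ring
    _ ≤ S * N (fun m n => v m n ^ θ * w m n ^ (1 - θ)) := by gcongr

theorem KernelBound.interpolate_q {p q : ℝ≥0∞} (hp : p ≠ 0) (hq : 1 ≤ q) (hq' : q ≠ ∞)
    (hk_one : KernelBound k (mixedENorm p 1) S) (hk_top : KernelBound k (mixedENorm p ∞) S) :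
    KernelBound k (mixedENorm p q) S :=
  have hqt : 1 ≤ q.toReal := by simpa using ENNReal.toReal_mono hq' hq
  hk_one.interpolate (by positivity) (div_le_one_of_le₀ hqt (by positivity))
    (fun _ _ => mixedENorm_mono) (mixedENorm_rpow_mul_rpow_le_of_q hp hq hq')
    (fun _ => exists_factorization_of_q hp hq hq') hk_top

theorem KernelBound.interpolate_p {p q : ℝ≥0∞} (hp : 1 ≤ p) (hp' : p ≠ ∞) (hq : q ≠ 0)
    (hk_one : KernelBound k (mixedENorm 1 q) S) (hk_top : KernelBound k (mixedENorm ∞ q) S) :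
    KernelBound k (mixedENorm p q) S :=
  have hpt : 1 ≤ p.toReal := by simpa using ENNReal.toReal_mono hp' hp
  hk_one.interpolate (by positivity) (div_le_one_of_le₀ hpt (by positivity))
    (fun _ _ => mixedENorm_mono) (mixedENorm_rpow_mul_rpow_le_of_p hp hp' hq)
    (fun _ => exists_factorization_of_p hp hp' hq) hk_top

end Kernel

section Schur

variable {α β : Type*} {k : α → β → α → β → ℝ≥0∞} {S : ℝ≥0∞}

theorem kernelBound_top_top
    (h : (⨆ m'n' : α × β, ∑' mn : α × β, k m'n'.1 m'n'.2 mn.1 mn.2) ≤ S) :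
    KernelBound k (mixedENorm ∞ ∞) S := by
  intro u _
  rw [mixedENorm_top_top, mixedENorm_top_top]
  refine iSup_le fun m'n' => ?_
  calc kernelOp k u m'n'.1 m'n'.2
      ≤ ∑' mn : α × β, k m'n'.1 m'n'.2 mn.1 mn.2 * ⨆ mn : α × β, u mn.1 mn.2 :=
        ENNReal.tsum_le_tsum fun mn => by
          gcongr
          exact le_iSup (fun mn : α × β => u mn.1 mn.2) mn
    _ = (∑' mn : α × β, k m'n'.1 m'n'.2 mn.1 mn.2) * ⨆ mn : α × β, u mn.1 mn.2 :=
        ENNReal.tsum_mul_right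
    _ ≤ S * ⨆ mn : α × β, u mn.1 mn.2 := by
        gcongr
        exact (le_iSup (fun m'n' : α × β => ∑' mn : α × β, k m'n'.1 m'n'.2 mn.1 mn.2) m'n').trans h

theorem kernelBound_one_one
    (h : (⨆ mn : α × β, ∑' m'n' : α × β, k m'n'.1 m'n'.2 mn.1 mn.2) ≤ S) :
    KernelBound k (mixedENorm 1 1) S := by
  intro u _
  rw [mixedENorm_one_one, mixedENorm_one_one]
  calc ∑' m'n' : α × β, kernelOp k u m'n'.1 m'n'.2
      = ∑' mn : α × β, (∑' m'n' : α × β, k m'n'.1 m'n'.2 mn.1 mn.2) * u mn.1 mn.2 := by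
        simp only [kernelOp]
        rw [ENNReal.tsum_comm]
        simp only [ENNReal.tsum_mul_right]
    _ ≤ ∑' mn : α × β, S * u mn.1 mn.2 :=
        ENNReal.tsum_le_tsum fun mn => by
          gcongr
          exact (le_iSup (fun mn : α × β => ∑' m'n' : α × β, k m'n'.1 m'n'.2 mn.1 mn.2) mn).trans h
    _ = S * ∑' mn : α × β, u mn.1 mn.2 := ENNReal.tsum_mul_left

theorem kernelBound_top_one (h : (⨆ n, ∑' n', ⨆ m', ∑' m, k m' n' m n) ≤ S) :
    KernelBound k (mixedENorm ∞ 1) S := by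
  intro u _
  simp only [mixedENorm, eSum_one, eSum_top]
  have hrow : ∀ n', ⨆ m', kernelOp k u m' n' ≤
      ∑' n, (⨆ m', ∑' m, k m' n' m n) * ⨆ m, u m n := fun n' =>
    iSup_le fun m' => by
      rw [kernelOp_eq_tsum_tsum]
      refine ENNReal.tsum_le_tsum fun n => ?_
      calc ∑' m, k m' n' m n * u m n ≤ ∑' m, k m' n' m n * ⨆ m, u m n :=
            ENNReal.tsum_le_tsum fun m => by gcongr; exact le_iSup (fun m => u m n) m
        _ = (∑' m, k m' n' m n) * ⨆ m, u m n := ENNReal.tsum_mul_right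
        _ ≤ (⨆ m', ∑' m, k m' n' m n) * ⨆ m, u m n := by
            gcongr
            exact le_iSup (fun m' => ∑' m, k m' n' m n) m'
  calc ∑' n', ⨆ m', kernelOp k u m' n'
      ≤ ∑' n', ∑' n, (⨆ m', ∑' m, k m' n' m n) * ⨆ m, u m n := ENNReal.tsum_le_tsum hrow
    _ = ∑' n, (∑' n', ⨆ m', ∑' m, k m' n' m n) * ⨆ m, u m n := by
        rw [ENNReal.tsum_comm]
        simp only [ENNReal.tsum_mul_right]
    _ ≤ ∑' n, S * ⨆ m, u m n :=
        ENNReal.tsum_le_tsum fun n => by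
          gcongr
          exact (le_iSup (fun n => ∑' n', ⨆ m', ∑' m, k m' n' m n) n).trans h
    _ = S * ∑' n, ⨆ m, u m n := ENNReal.tsum_mul_left

theorem kernelBound_one_top (h : (⨆ n', ∑' n, ⨆ m, ∑' m', k m' n' m n) ≤ S) :
    KernelBound k (mixedENorm 1 ∞) S := by
  intro u _
  simp only [mixedENorm, eSum_one, eSum_top]
  refine iSup_le fun n' => ?_
  calc ∑' m', kernelOp k u m' n'
      = ∑' n, ∑' m, (∑' m', k m' n' m n) * u m n := by
        simp only [kernelOp_eq_tsum_tsum]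
        rw [ENNReal.tsum_comm]
        refine tsum_congr fun n => ?_
        rw [ENNReal.tsum_comm]
        simp only [ENNReal.tsum_mul_right]
    _ ≤ ∑' n, (⨆ m, ∑' m', k m' n' m n) * ∑' m, u m n := by
        simp only [← ENNReal.tsum_mul_left]
        gcongr with n m
        exact le_iSup (fun m => ∑' m', k m' n' m n) m
    _ ≤ ∑' n, (⨆ m, ∑' m', k m' n' m n) * ⨆ n, ∑' m, u m n := by
        gcongr with n
        exact le_iSup (fun n => ∑' m, u m n) n
    _ = (∑' n, ⨆ m, ∑' m', k m' n' m n) * ⨆ n, ∑' m, u m n := ENNReal.tsum_mul_right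
    _ ≤ S * ⨆ n, ∑' m, u m n := by
        gcongr
        exact (le_iSup (fun n' => ∑' n, ⨆ m, ∑' m', k m' n' m n) n').trans h

def schurConstant (k : α → β → α → β → ℝ≥0∞) : ℝ≥0∞ :=
  (⨆ n, ∑' n', ⨆ m', ∑' m, k m' n' m n) ⊔ (⨆ n', ∑' n, ⨆ m, ∑' m', k m' n' m n) ⊔
    (⨆ m'n' : α × β, ∑' mn : α × β, k m'n'.1 m'n'.2 mn.1 mn.2) ⊔
    (⨆ mn : α × β, ∑' m'n' : α × β, k m'n'.1 m'n'.2 mn.1 mn.2)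

theorem kernelBound_schurConstant {p q : ℝ≥0∞} (hp : 1 ≤ p) (hq : 1 ≤ q) :
    KernelBound k (mixedENorm p q) (schurConstant k) := by
  have h_one_one : KernelBound k (mixedENorm 1 1) (schurConstant k) :=
    kernelBound_one_one le_sup_right
  have h_one_top : KernelBound k (mixedENorm 1 ∞) (schurConstant k) :=
    kernelBound_one_top (le_sup_right.trans (le_sup_left.trans le_sup_left))
  have h_top_one : KernelBound k (mixedENorm ∞ 1) (schurConstant k) :=
    kernelBound_top_one (le_sup_left.trans (le_sup_left.trans le_sup_left))
  have h_top_top : KernelBound k (mixedENorm ∞ ∞) (schurConstant k) :=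
    kernelBound_top_top (le_sup_right.trans le_sup_left)
  have h_one_q : KernelBound k (mixedENorm 1 q) (schurConstant k) := by
    rcases eq_or_ne q ∞ with rfl | hq'
    · exact h_one_top
    · exact .interpolate_q one_ne_zero hq hq' h_one_one h_one_top
  have h_top_q : KernelBound k (mixedENorm ∞ q) (schurConstant k) := by
    rcases eq_or_ne q ∞ with rfl | hq'
    · exact h_top_top
    · exact .interpolate_q ENNReal.top_ne_zero hq hq' h_top_one h_top_top
  rcases eq_or_ne p ∞ with rfl | hp'
  · exact h_top_q
  · exact .interpolate_p hp hp' (zero_lt_one.trans_le hq).ne' h_one_q h_top_q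

end Schur

theorem lpqNorm_le_mixedENorm_kernelOp {ι : Type*} (p q : ℝ≥0∞) (K : ι → ι → ι → ι → ℂ)
    (c : ι → ι → ℂ) :
    lpqNorm p q (fun m' n' => ∑' mn : ι × ι, K m' n' mn.1 mn.2 * c mn.1 mn.2) ≤
      mixedENorm p q (kernelOp (fun m' n' m n => ‖K m' n' m n‖ₑ) (fun m n => ‖c m n‖ₑ)) :=
  mixedENorm_mono fun _ _ => by
    simp only [kernelOp, ← enorm_mul]
    exact enorm_tsum_le_tsum_enorm

/-- Proposition 5.1 (iii): if the kernel `K` satisfies the two mixed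
Schur conditions and the two plain Schur conditions, then the operator
`(Kc)_{m',n'} = Σ_{(m,n)} K_{m',n',m,n} c_{m,n}` is continuous on `ℓ^{p,q}` for all
`1 ≤ p, q ≤ ∞`. The lattice `Λ = αℤ^d × βℤ^d` is identified with `ℤ^d × ℤ^d`. -/
theorem statement9 {d : ℕ}
    (K : (Fin d → ℤ) → (Fin d → ℤ) → (Fin d → ℤ) → (Fin d → ℤ) → ℂ)
    (h₁ : (⨆ n : Fin d → ℤ, ∑' n' : Fin d → ℤ, ⨆ m' : Fin d → ℤ, ∑' m : Fin d → ℤ,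
      (‖K m' n' m n‖₊ : ℝ≥0∞)) < ⊤)
    (h₂ : (⨆ n' : Fin d → ℤ, ∑' n : Fin d → ℤ, ⨆ m : Fin d → ℤ, ∑' m' : Fin d → ℤ,
      (‖K m' n' m n‖₊ : ℝ≥0∞)) < ⊤)
    (h₃ : (⨆ m'n' : (Fin d → ℤ) × (Fin d → ℤ), ∑' mn : (Fin d → ℤ) × (Fin d → ℤ),
      (‖K m'n'.1 m'n'.2 mn.1 mn.2‖₊ : ℝ≥0∞)) < ⊤)
    (h₄ : (⨆ mn : (Fin d → ℤ) × (Fin d → ℤ), ∑' m'n' : (Fin d → ℤ) × (Fin d → ℤ),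
      (‖K m'n'.1 m'n'.2 mn.1 mn.2‖₊ : ℝ≥0∞)) < ⊤) :
    ∀ p q : ℝ≥0∞, 1 ≤ p → 1 ≤ q → ∃ C : ℝ≥0∞, 0 < C ∧ C < ⊤ ∧
      ∀ c : (Fin d → ℤ) → (Fin d → ℤ) → ℂ, lpqNorm p q c < ⊤ →
        lpqNorm p q (fun m' n' =>
            ∑' mn : (Fin d → ℤ) × (Fin d → ℤ), K m' n' mn.1 mn.2 * c mn.1 mn.2) ≤
          C * lpqNorm p q c := by
  intro p q hp hq
  set k := fun m' n' m n => ‖K m' n' m n‖ₑ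
  have hk : schurConstant k < ∞ := by
    simp only [schurConstant, sup_lt_iff]
    exact ⟨⟨⟨h₁, h₂⟩, h₃⟩, h₄⟩
  refine ⟨schurConstant k ⊔ 1, zero_lt_one.trans_le le_sup_right,
    sup_lt_iff.2 ⟨hk, ENNReal.one_lt_top⟩, fun c hc => ?_⟩
  calc _ ≤ mixedENorm p q (kernelOp k fun m n => ‖c m n‖ₑ) :=
        lpqNorm_le_mixedENorm_kernelOp p q K c
    _ ≤ (schurConstant k ⊔ 1) * lpqNorm p q c :=
        (kernelBound_schurConstant hp hq).mono le_sup_left _ hc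
end
end
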